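/- Every polynomial vector field of degree at most k−1 on ℝ^d decomposes as ℙ_{k−1}(ℝ^d; ℝ^d) = grad ℙ_k(ℝ^d) ⊕ ℙ_{k−2}(ℝ^d; 𝕂)·x, where the sum is direct. -/

import Mathlib

open MvPolynomial Finset

/-!
Write `E q = ∑ᵢ xᵢ ∂ᵢ q` for the Euler operator, which multiplies each monomial by its degree,
and `κ w = ∑ᵢ xᵢ wᵢ` for contraction with `x`. Then `κ (grad p) = E p`, and `κ (N x) = 0` for
skew `N`. Existence: invert `E` on `κ v` (which has no constant term) to get `p` with
`E p = κ v`, so that `w = v - grad p` satisfies `κ w = 0`. Then `∑ⱼ xⱼ ∂ᵢ wⱼ = ∂ᵢ (κ w) - wᵢ = -wᵢ`,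
so `N = (E + 2)⁻¹ (∂ⱼ wᵢ - ∂ᵢ wⱼ)` is skew with `N x = (E + 1)⁻¹ (E wᵢ + wᵢ) = w`.
Uniqueness: if `grad p + N x = grad p' + N' x`, applying `κ` gives `E (p - p') = 0`, so `p - p'`
is constant.
-/

namespace MvPolynomial

section CommSemiring

variable {σ R : Type*} [CommSemiring R]

noncomputable def degreeScale (c : ℕ → R) (q : MvPolynomial σ R) : MvPolynomial σ R :=
  ∑ s ∈ q.support, monomial s (c s.degree * coeff s q)

@[simp]
theorem coeff_degreeScale (c : ℕ → R) (q : MvPolynomial σ R) (s : σ →₀ ℕ) :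
    coeff s (degreeScale c q) = c s.degree * coeff s q := by
  classical
  simp only [degreeScale, coeff_sum, coeff_monomial, Finset.sum_ite_eq', mem_support_iff]
  split_ifs with h
  · rfl
  · simp [not_not.mp h]

theorem support_degreeScale_subset (c : ℕ → R) (q : MvPolynomial σ R) :
    (degreeScale c q).support ⊆ q.support := by
  intro s hs
  rw [mem_support_iff, coeff_degreeScale] at *
  exact right_ne_zero_of_mul hs

theorem degree_sub_single_one_add_one {s : σ →₀ ℕ} {i : σ} (hi : s i ≠ 0) :
    (s - Finsupp.single i 1).degree + 1 = s.degree := by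
  conv_rhs => rw [← Finsupp.sub_add_single_one_cancel hi]
  rw [map_add, Finsupp.degree_single]

theorem degreeScale_mul_X {c c' : ℕ → R} (hc : ∀ n, c' (n + 1) = c n)
    (q : MvPolynomial σ R) (j : σ) :
    degreeScale c q * X j = degreeScale c' (q * X j) := by
  classical
  ext s
  simp only [coeff_mul_X', coeff_degreeScale]
  split_ifs with h
  · rw [← degree_sub_single_one_add_one (Finsupp.mem_support_iff.mp h), hc]
  · rw [mul_zero]

theorem coeff_X_mul_pderiv (i : σ) (q : MvPolynomial σ R) (s : σ →₀ ℕ) :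
    coeff s (X i * pderiv i q) = s i * coeff s q := by
  classical
  rw [coeff_X_mul', coeff_pderiv]
  split_ifs with h
  · have hi : 1 ≤ s i := Nat.one_le_iff_ne_zero.mpr (Finsupp.mem_support_iff.mp h)
    rw [tsub_add_cancel_of_le (Finsupp.single_le_iff.mpr hi), mul_comm, Finsupp.tsub_apply,
      Finsupp.single_eq_same, ← Nat.cast_add_one, Nat.sub_add_cancel hi]
  · rw [Finsupp.notMem_support_iff.mp h, Nat.cast_zero, zero_mul]

theorem degree_lt_of_mem_support_pderiv {i : σ} {q : MvPolynomial σ R} {s : σ →₀ ℕ}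
    (hs : s ∈ (pderiv i q).support) : s.degree < q.totalDegree := by
  rw [mem_support_iff, coeff_pderiv] at hs
  have hmem : s + Finsupp.single i 1 ∈ q.support := mem_support_iff.mpr (left_ne_zero_of_mul hs)
  have hle : (s + Finsupp.single i 1).degree ≤ q.totalDegree := le_totalDegree hmem
  rw [map_add, Finsupp.degree_single] at hle
  omega

theorem totalDegree_pderiv_le (i : σ) (q : MvPolynomial σ R) :
    (pderiv i q).totalDegree ≤ q.totalDegree - 1 :=
  Finset.sup_le fun _ hs => Nat.le_sub_one_of_lt (degree_lt_of_mem_support_pderiv hs)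

theorem eq_zero_or_totalDegree_lt {q : MvPolynomial σ R} {m : ℕ}
    (h : ∀ s ∈ q.support, s.degree < m) : q = 0 ∨ q.totalDegree < m := by
  rcases q.support.eq_empty_or_nonempty with hq | ⟨s, hs⟩
  · exact Or.inl (support_eq_empty.mp hq)
  · exact Or.inr ((Finset.sup_lt_iff (Nat.zero_lt_of_lt (h s hs))).mpr h)

variable [Fintype σ]

theorem coeff_sum_X_mul_pderiv (q : MvPolynomial σ R) (s : σ →₀ ℕ) :
    coeff s (∑ i, X i * pderiv i q) = s.degree * coeff s q := by
  simp only [coeff_sum, coeff_X_mul_pderiv, ← Finset.sum_mul, Finsupp.degree_eq_sum, Nat.cast_sum]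

theorem constantCoeff_sum_X_mul (w : σ → MvPolynomial σ R) :
    constantCoeff (∑ i, X i * w i) = 0 := by
  simp only [map_sum, map_mul, constantCoeff_X, zero_mul, Finset.sum_const_zero]

theorem totalDegree_sum_X_mul_le {w : σ → MvPolynomial σ R} {m : ℕ}
    (hw : ∀ i, (w i).totalDegree ≤ m) : (∑ i, X i * w i).totalDegree ≤ m + 1 := by
  refine (totalDegree_finsetSum _ _).trans (Finset.sup_le fun i _ => ?_)
  have hX : (X i : MvPolynomial σ R).totalDegree ≤ 1 :=
    (totalDegree_monomial_le (Finsupp.single i 1) 1).trans (by simp)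
  exact (totalDegree_mul _ _).trans (by grind)

end CommSemiring

section CommRing

variable {σ R : Type*} [Fintype σ] [CommRing R] [IsDomain R] [CharZero R]

theorem pderiv_eq_zero_of_sum_X_mul_pderiv_eq_zero {q : MvPolynomial σ R}
    (h : ∑ i, X i * pderiv i q = 0) (i : σ) : pderiv i q = 0 := by
  classical
  have hq : q = C (coeff 0 q) := by
    ext s
    rw [coeff_C]
    split_ifs with hs
    · rw [hs]
    · have hcoeff := congrArg (coeff s) h
      rw [coeff_sum_X_mul_pderiv, coeff_zero] at hcoeff
      refine (mul_eq_zero.mp hcoeff).resolve_left ?_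
      simpa [Finsupp.degree_eq_zero_iff] using Ne.symm hs
  rw [hq, pderiv_C]

theorem sum_X_mul_sum_mul_X_eq_zero {N : σ → σ → MvPolynomial σ R}
    (hN : ∀ i j, N j i = -N i j) : ∑ i, X i * ∑ j, N i j * X j = 0 := by
  simp_rw [Finset.mul_sum]
  have hswap : ∑ i, ∑ j, X i * (N i j * X j) = -∑ i, ∑ j, X i * (N i j * X j) := by
    conv_lhs => rw [Finset.sum_comm]
    rw [← Finset.sum_neg_distrib]
    refine Finset.sum_congr rfl fun j _ => ?_
    rw [← Finset.sum_neg_distrib]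
    refine Finset.sum_congr rfl fun i _ => ?_
    rw [hN i j]
    ring
  exact CharZero.eq_neg_self_iff.mp hswap

theorem pderiv_eq_of_add_eq {p p' : MvPolynomial σ R} {w w' : σ → MvPolynomial σ R}
    (hw : ∑ i, X i * w i = 0) (hw' : ∑ i, X i * w' i = 0)
    (h : ∀ i, pderiv i p + w i = pderiv i p' + w' i) (i : σ) : pderiv i p = pderiv i p' := by
  have hE : ∑ i, X i * pderiv i (p - p') = 0 := by
    have hdiff : ∀ i, pderiv i (p - p') = w' i - w i := fun i => by
      rw [map_sub]
      linear_combination h i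
    simp only [hdiff, mul_sub, Finset.sum_sub_distrib, hw, hw', sub_self]
  rw [← sub_eq_zero, ← map_sub]
  exact pderiv_eq_zero_of_sum_X_mul_pderiv_eq_zero hE i

end CommRing

section Field

variable {σ R : Type*} [Field R]

noncomputable def skewPotential (w : σ → MvPolynomial σ R) (i j : σ) : MvPolynomial σ R :=
  degreeScale (fun n => ((n : R) + 2)⁻¹) (pderiv j (w i) - pderiv i (w j))

theorem skewPotential_antisymm (w : σ → MvPolynomial σ R) (i j : σ) :
    skewPotential w j i = -skewPotential w i j := by
  ext s
  simp only [skewPotential, coeff_degreeScale, coeff_neg, coeff_sub]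
  ring

theorem skewPotential_eq_zero_or_totalDegree_lt {w : σ → MvPolynomial σ R} {m : ℕ}
    (hw : ∀ i, (w i).totalDegree ≤ m) (i j : σ) :
    skewPotential w i j = 0 ∨ (skewPotential w i j).totalDegree < m := by
  classical
  refine eq_zero_or_totalDegree_lt fun s hs => ?_
  rcases Finset.mem_union.mp (support_sub _ _ _ (support_degreeScale_subset _ _ hs)) with h | h
  · exact (degree_lt_of_mem_support_pderiv h).trans_le (hw i)
  · exact (degree_lt_of_mem_support_pderiv h).trans_le (hw j)

variable [Fintype σ] [CharZero R]

theorem exists_sum_X_mul_pderiv_eq {f : MvPolynomial σ R} (hf : constantCoeff f = 0) :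
    ∃ p : MvPolynomial σ R, p.totalDegree ≤ f.totalDegree ∧ ∑ i, X i * pderiv i p = f := by
  refine ⟨degreeScale (fun n => (n : R)⁻¹) f,
    totalDegree_le_of_support_subset (support_degreeScale_subset _ _), ?_⟩
  ext s
  rw [coeff_sum_X_mul_pderiv, coeff_degreeScale, ← mul_assoc]
  rcases eq_or_ne s 0 with rfl | hs
  · simp [← constantCoeff_eq, hf]
  · rw [mul_inv_cancel₀ (by simpa [Finsupp.degree_eq_zero_iff] using hs), one_mul]

theorem sum_skewPotential_mul_X {w : σ → MvPolynomial σ R} (hw : ∑ i, X i * w i = 0)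
    (i : σ) : ∑ j, skewPotential w i j * X j = w i := by
  classical
  have hcontract : ∑ j, X j * pderiv i (w j) = -w i := by
    have h := congrArg (pderiv i) hw
    simp only [map_sum, pderiv_mul, pderiv_X, Pi.single_apply, ite_mul, one_mul, zero_mul,
      Finset.sum_add_distrib, Finset.sum_ite_eq', Finset.mem_univ, if_true, map_zero] at h
    linear_combination h
  have hsum : ∑ j, (pderiv j (w i) - pderiv i (w j)) * X j
      = ∑ j, X j * pderiv j (w i) + w i := by
    simp only [sub_mul, Finset.sum_sub_distrib, mul_comm (pderiv _ _) (X _), hcontract,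
      sub_neg_eq_add]
  have hscale : ∑ j, skewPotential w i j * X j
      = degreeScale (fun n => ((n : R) + 1)⁻¹)
          (∑ j, (pderiv j (w i) - pderiv i (w j)) * X j) := by
    simp only [skewPotential]
    rw [Finset.sum_congr rfl fun j _ => degreeScale_mul_X (c' := fun n => ((n : R) + 1)⁻¹)
      (fun n => by push_cast; ring_nf) _ j]
    ext s
    simp only [coeff_sum, coeff_degreeScale, Finset.mul_sum]
  ext s
  rw [hscale, hsum, coeff_degreeScale, coeff_add, coeff_sum_X_mul_pderiv, ← add_one_mul,
    ← mul_assoc, inv_mul_cancel₀ (Nat.cast_add_one_ne_zero _), one_mul]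

end Field

end MvPolynomial

theorem stmt_6_general (d k : ℕ) (hk : 1 ≤ k)
    (v : Fin d → MvPolynomial (Fin d) ℝ) (hv : ∀ i, (v i).totalDegree ≤ k - 1) :
    ∃! gw : (Fin d → MvPolynomial (Fin d) ℝ) × (Fin d → MvPolynomial (Fin d) ℝ),
      (∃ p : MvPolynomial (Fin d) ℝ, p.totalDegree ≤ k ∧ gw.1 = fun i => pderiv i p) ∧
      (∃ N : Fin d → Fin d → MvPolynomial (Fin d) ℝ,
        (∀ i j, N i j = 0 ∨ (N i j).totalDegree + 2 ≤ k) ∧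
        (∀ i j, N j i = - N i j) ∧
        gw.2 = fun i => ∑ j : Fin d, N i j * X j) ∧
      v = gw.1 + gw.2 := by
  obtain ⟨p, hp, hpv⟩ := exists_sum_X_mul_pderiv_eq (constantCoeff_sum_X_mul v)
  have hpk : p.totalDegree ≤ k := hp.trans ((totalDegree_sum_X_mul_le hv).trans (by omega))
  set w : Fin d → MvPolynomial (Fin d) ℝ := fun i => v i - pderiv i p with hw_def
  have hw : ∑ i, X i * w i = 0 := by
    simp only [hw_def, mul_sub, Finset.sum_sub_distrib, hpv, sub_self]
  have hw_deg : ∀ i, (w i).totalDegree ≤ k - 1 := fun i =>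
    (totalDegree_sub _ _).trans (max_le (hv i) ((totalDegree_pderiv_le i p).trans (by omega)))
  refine ⟨(fun i => pderiv i p, w), ⟨⟨p, hpk, rfl⟩, ⟨skewPotential w, fun i j => ?_,
    skewPotential_antisymm w, funext fun i => (sum_skewPotential_mul_X hw i).symm⟩, ?_⟩, ?_⟩
  · exact (skewPotential_eq_zero_or_totalDegree_lt hw_deg i j).imp_right (by omega)
  · ext1 i
    simp [hw_def]
  · rintro ⟨_, w'⟩ ⟨⟨p', -, rfl⟩, ⟨N', -, hN', rfl⟩, hv'⟩
    have hgrad := pderiv_eq_of_add_eq (p := p') (p' := p) (sum_X_mul_sum_mul_X_eq_zero hN') hw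
      (fun i => by simp [hw_def, congrFun hv' i])
    refine Prod.ext (funext hgrad) (funext fun i => ?_)
    simp [hw_def, congrFun hv' i, hgrad i]

/-- Direct sum decomposition `ℙ_{k−1}(ℝ^d; ℝ^d) = grad ℙ_k(ℝ^d) ⊕ ℙ_{k−2}(ℝ^d; 𝕂)·x`:
every polynomial vector field of degree at most `k-1` is uniquely the sum of a gradient
of a degree-`≤ k` polynomial and a vector field of the form `x ↦ N(x) x` with `N`
skew-symmetric-matrix-valued of degree at most `k-2`. -/
theorem stmt_6 (d k : ℕ) (hd : 1 ≤ d) (hk : 1 ≤ k)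
    (v : Fin d → MvPolynomial (Fin d) ℝ) (hv : ∀ i, (v i).totalDegree ≤ k - 1) :
    ∃! gw : (Fin d → MvPolynomial (Fin d) ℝ) × (Fin d → MvPolynomial (Fin d) ℝ),
      (∃ p : MvPolynomial (Fin d) ℝ, p.totalDegree ≤ k ∧ gw.1 = fun i => pderiv i p) ∧
      (∃ N : Fin d → Fin d → MvPolynomial (Fin d) ℝ,
        (∀ i j, N i j = 0 ∨ (N i j).totalDegree + 2 ≤ k) ∧
        (∀ i j, N j i = - N i j) ∧
        gw.2 = fun i => ∑ j : Fin d, N i j * X j) ∧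
      v = gw.1 + gw.2 :=
  stmt_6_general d k hk v hv
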